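/- Fix integers K ≥ 1 and T ≥ 1, and equip ℝ^K with Lebesgue measure. For each t = 1, …, T let q_t be a probability density on ℝ^K and let L_t : ℝ^K → (0,∞) be measurable with q_t·|log L_t| integrable. Let p_1 be a probability density on ℝ^K and, for t = 2, …, T, let p_t : ℝ^K × ℝ^K → [0,∞) be a measurable transition density (θ ↦ p_t(θ, θ′) is a probability density for every θ′). Let P(θ_1, …, θ_T) = p_1(θ_1)·∏_{t=2}^T p_t(θ_t, θ_{t−1}) and Q(θ_1, …, θ_T) = ∏_{t=1}^T q_t(θ_t); assume the evidence Z = ∫_{(ℝ^K)^T} P(θ_{1:T}) · ∏_{t=1}^T L_t(θ_t) dθ_{1:T} satisfies 0 < Z < ∞, that Q = 0 a.e. on {P = 0}, that Q·|log(Q/P)| is integrable, and that for t = 2, …, T the map θ′ ↦ KL(q_t ‖ p_t(·, θ′)) is defined q_{t−1}-a.e. and q_{t−1}-integrable. Then the log evidence satisfies the T-stage evidence lower bound: log Z ≥ [−KL(q_1 ‖ p_1) + ∫ q_1 · log L_1] + Σ_{t=2}^T [ −∫_{ℝ^K} q_{t−1}(θ′) · KL(q_t ‖ p_t(·, θ′))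 dθ′ + ∫ q_t · log L_t ], i.e., the single-stage ELBO for the first stage plus the temporally dependent ELBO terms for the follow-up stages. -/

import Mathlib

/-!
Jensen's inequality for `log` under the variational density `Q = ∏ q_t` (Gibbs' inequality)
gives `log Z ≥ ∫ Q log (P ∏ L_t / Q) = -KL(Q ‖ P) + ∑_t ∫ Q log L_t`. Because `Q` is a product
density, integrating a function of one coordinate `θ_t` against `Q` only sees `q_t`, and a
function of `(θ_t, θ_{t-1})` only sees `q_t ⊗ q_{t-1}` (Fubini after splitting off one
coordinate). Since `log (Q / P)` splits into the stage terms `log (q_1 / p_1) (θ_1)` and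
`log (q_t / p_t (·, θ_{t-1})) (θ_t)`, this turns `KL(Q ‖ P)` into
`KL(q_1 ‖ p_1) + ∑_t ∫ q_{t-1}(θ') KL(q_t ‖ p_t(·, θ')) dθ'`. Each transition term is integrable on
the product space because `q |log (q / p)| ≤ q log (q / p) + 2 p`.
-/

open MeasureTheory Real

/-- The previous stage index: `t - 1` in `Fin T` (only used when `1 ≤ t`). -/
def prevStage' {T : ℕ} (t : Fin T) : Fin T :=
  ⟨t.val - 1, lt_of_le_of_lt (Nat.sub_le _ _) t.isLt⟩

open Finset Function Filter

theorem mul_log_div_le_sub {a b : ℝ} (ha : 0 ≤ a) (hb : 0 ≤ b) (hab : b = 0 → a = 0) :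
    a * log (b / a) ≤ b - a := by
  rcases ha.eq_or_lt with rfl | ha
  · simpa using hb
  have hb : 0 < b := hb.lt_of_ne fun h => ha.ne' (hab h.symm)
  calc a * log (b / a) ≤ a * (b / a - 1) :=
        mul_le_mul_of_nonneg_left (log_le_sub_one_of_pos (div_pos hb ha)) ha.le
    _ = b - a := by field_simp

theorem mul_abs_log_div_le {a b : ℝ} (ha : 0 ≤ a) (hb : 0 ≤ b) :
    a * |log (a / b)| ≤ a * log (a / b) + 2 * b := by
  have hneg : -(a * log (a / b)) ≤ b := by
    rw [← mul_neg, ← log_inv, inv_div]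
    rcases hb.eq_or_lt with rfl | hb
    · simp
    · linarith [mul_log_div_le_sub ha hb.le fun h => absurd h hb.ne']
  rw [show a * |log (a / b)| = |a * log (a / b)| by rw [abs_mul, abs_of_nonneg ha]]
  exact abs_le.mpr ⟨by linarith, by linarith⟩

theorem mul_log_mul_prod_div {κ : Type*} (s : Finset κ) {a b : ℝ} {c : κ → ℝ}
    (hab : b = 0 → a = 0) (hc : ∀ k ∈ s, c k ≠ 0) :
    a * log ((b * ∏ k ∈ s, c k) / a) = -(a * log (a / b)) + ∑ k ∈ s, a * log (c k) := by
  rcases eq_or_ne a 0 with rfl | ha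
  · simp
  have hb : b ≠ 0 := mt hab ha
  have hc' : ∏ k ∈ s, c k ≠ 0 := prod_ne_zero_iff.mpr hc
  rw [log_div (mul_ne_zero hb hc') ha, log_mul hb hc', log_prod hc, log_div ha hb, ← mul_sum]
  ring

theorem mul_log_mul_prod_div_mul_prod {κ : Type*} (s : Finset κ) {a b c : ℝ} {x y : κ → ℝ}
    (h : c ≠ 0 → a * ∏ k ∈ s, x k ≠ 0 ∧ b * ∏ k ∈ s, y k ≠ 0) :
    c * log ((a * ∏ k ∈ s, x k) / (b * ∏ k ∈ s, y k))
      = c * log (a / b) + ∑ k ∈ s, c * log (x k / y k) := by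
  rcases eq_or_ne c 0 with rfl | hc
  · simp
  obtain ⟨hax, hby⟩ := h hc
  rw [mul_ne_zero_iff, prod_ne_zero_iff] at hax hby
  have hxy : ∀ k ∈ s, x k / y k ≠ 0 := fun k hk => div_ne_zero (hax.2 k hk) (hby.2 k hk)
  rw [mul_div_mul_comm, ← prod_div_distrib, log_mul (div_ne_zero hax.1 hby.1)
    (prod_ne_zero_iff.mpr hxy), log_prod hxy, mul_add, mul_sum]

section Integrals

variable {β γ : Type*} [MeasurableSpace β] [MeasurableSpace γ] {μ : Measure β} {ν : Measure γ}

theorem integrable_mul_log_of_mul_abs_log {f g : β → ℝ} (hf : Measurable f) (hg : Measurable g)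
    (hf0 : ∀ x, 0 ≤ f x) (h : Integrable (fun x => f x * |log (g x)|) μ) :
    Integrable (fun x => f x * log (g x)) μ :=
  h.mono' (hf.mul (measurable_log.comp hg)).aestronglyMeasurable <|
    Eventually.of_forall fun x => by rw [norm_eq_abs, abs_mul, abs_of_nonneg (hf0 x)]

theorem integral_mul_abs_log_div_le {q p : β → ℝ} (hq : ∀ x, 0 ≤ q x) (hp : ∀ x, 0 ≤ p x)
    (hp_int : Integrable p μ) (h : Integrable (fun x => q x * log (q x / p x)) μ) :
    ∫ x, q x * |log (q x / p x)| ∂μ ≤ ∫ x, q x * log (q x / p x) ∂μ + 2 * ∫ x, p x ∂μ := by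
  rw [← integral_const_mul, ← integral_add h (hp_int.const_mul 2)]
  exact integral_mono_of_nonneg (Eventually.of_forall fun x => mul_nonneg (hq x) (abs_nonneg _))
    (h.add (hp_int.const_mul 2)) (Eventually.of_forall fun x => mul_abs_log_div_le (hq x) (hp x))

theorem integral_mul_log_div_le_log_integral {Q f : β → ℝ} (hQ : ∀ x, 0 ≤ Q x)
    (hQ1 : ∫ x, Q x ∂μ = 1) (hf : ∀ x, 0 ≤ f x) (hf_int : Integrable f μ)
    (hf_pos : 0 < ∫ x, f x ∂μ) (hsupp : ∀ᵐ x ∂μ, f x = 0 → Q x = 0)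
    (h : Integrable (fun x => Q x * log (f x / Q x)) μ) :
    ∫ x, Q x * log (f x / Q x) ∂μ ≤ log (∫ x, f x ∂μ) := by
  set Z := ∫ x, f x ∂μ
  have hQ_int : Integrable Q μ := integrable_of_integral_eq_one hQ1
  -- `log y ≤ y - 1` at the ratio of `f / Z` to `Q`
  have hpt : ∀ᵐ x ∂μ, Q x * log (f x / Q x) ≤ (f x / Z - Q x) + Q x * log Z := by
    filter_upwards [hsupp] with x hx
    have hle := mul_log_div_le_sub (hQ x) (div_nonneg (hf x) hf_pos.le)
      fun h => hx ((div_eq_zero_iff.mp h).resolve_right hf_pos.ne')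
    have hsplit : Q x * log (f x / Q x) = Q x * log (f x / Z / Q x) + Q x * log Z := by
      rcases eq_or_ne (Q x) 0 with h0 | h0
      · simp [h0]
      have hfx : f x ≠ 0 := fun h => h0 (hx h)
      rw [div_right_comm, log_div (div_ne_zero hfx h0) hf_pos.ne']
      ring
    linarith
  have hfZ : Integrable (fun x => f x / Z - Q x) μ := (hf_int.div_const Z).sub hQ_int
  have hQZ : Integrable (fun x => Q x * log Z) μ := hQ_int.mul_const _
  calc ∫ x, Q x * log (f x / Q x) ∂μ ≤ ∫ x, (f x / Z - Q x) + Q x * log Z ∂μ :=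
        integral_mono_ae h (hfZ.add hQZ) hpt
    _ = log Z := by
      rw [integral_add hfZ hQZ,
        integral_sub (hf_int.div_const Z) hQ_int, integral_div, integral_mul_const, hQ1,
        div_self hf_pos.ne']
      ring

theorem elbo_le_log_integral_mul_prod {κ : Type*} [Fintype κ] {Q f : β → ℝ} {L : κ → β → ℝ}
    (hQ : ∀ x, 0 ≤ Q x) (hQ1 : ∫ x, Q x ∂μ = 1) (hf : ∀ x, 0 ≤ f x) (hL : ∀ k x, 0 < L k x)
    (hfL_int : Integrable (fun x => f x * ∏ k, L k x) μ)
    (hfL_pos : 0 < ∫ x, f x * ∏ k, L k x ∂μ) (hsupp : ∀ᵐ x ∂μ, f x = 0 → Q x = 0)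
    (hQf : Integrable (fun x => Q x * log (Q x / f x)) μ)
    (hQL : ∀ k, Integrable (fun x => Q x * log (L k x)) μ) :
    -(∫ x, Q x * log (Q x / f x) ∂μ) + ∑ k, ∫ x, Q x * log (L k x) ∂μ
      ≤ log (∫ x, f x * ∏ k, L k x ∂μ) := by
  have hid : ∀ᵐ x ∂μ, Q x * log ((f x * ∏ k, L k x) / Q x)
      = -(Q x * log (Q x / f x)) + ∑ k, Q x * log (L k x) :=
    hsupp.mono fun x hx => mul_log_mul_prod_div _ hx fun k _ => (hL k x).ne'
  have hneg : Integrable (fun x => -(Q x * log (Q x / f x))) μ := hQf.neg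
  have hsum : Integrable (fun x => ∑ k, Q x * log (L k x)) μ :=
    integrable_finsetSum _ fun k _ => hQL k
  calc -(∫ x, Q x * log (Q x / f x) ∂μ) + ∑ k, ∫ x, Q x * log (L k x) ∂μ
      = ∫ x, -(Q x * log (Q x / f x)) + ∑ k, Q x * log (L k x) ∂μ := by
        rw [integral_add hneg hsum, integral_neg, integral_finsetSum _ fun k _ => hQL k]
    _ = ∫ x, Q x * log ((f x * ∏ k, L k x) / Q x) ∂μ := (integral_congr_ae hid).symm
    _ ≤ log (∫ x, f x * ∏ k, L k x ∂μ) :=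
        integral_mul_log_div_le_log_integral hQ hQ1
          (fun x => mul_nonneg (hf x) (prod_nonneg fun k _ => (hL k x).le)) hfL_int hfL_pos
          (hsupp.mono fun x hx h => hx ((mul_eq_zero.mp h).resolve_right
            (prod_pos fun k _ => hL k x).ne'))
          ((hneg.add hsum).congr (hid.mono fun x hx => hx.symm))

theorem integrable_mul_integral_mul_abs_log_div [SFinite μ] {q₁ : γ → ℝ} {q₂ : β → ℝ}
    {p : β → γ → ℝ} (hq₁_meas : Measurable q₁) (hq₁ : ∀ x, 0 ≤ q₁ x) (hq₁_int : Integrable q₁ ν)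
    (hq₂_meas : Measurable q₂) (hq₂ : ∀ x, 0 ≤ q₂ x) (hp_meas : Measurable (uncurry p))
    (hp : ∀ x x', 0 ≤ p x x') (hp_int : ∀ x', ∫ x, p x x' ∂μ = 1)
    (hsec : ∀ᵐ x' ∂ν, q₁ x' ≠ 0 → Integrable (fun x => q₂ x * log (q₂ x / p x x')) μ)
    (hKL : Integrable (fun x' => q₁ x' * ∫ x, q₂ x * log (q₂ x / p x x') ∂μ) ν) :
    Integrable (fun x' => q₁ x' * ∫ x, q₂ x * |log (q₂ x / p x x')| ∂μ) ν := by
  have hmeas : StronglyMeasurable fun x' => ∫ x, q₂ x * |log (q₂ x / p x x')| ∂μ :=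
    StronglyMeasurable.integral_prod_left (f := fun x x' => q₂ x * |log (q₂ x / p x x')|)
      (by fun_prop)
  refine (hKL.add (hq₁_int.const_mul 2)).mono'
    (hq₁_meas.aestronglyMeasurable.mul hmeas.aestronglyMeasurable) ?_
  filter_upwards [hsec] with x' hx'
  rw [norm_eq_abs, abs_of_nonneg (mul_nonneg (hq₁ x')
    (integral_nonneg fun x => mul_nonneg (hq₂ x) (abs_nonneg _)))]
  rcases eq_or_ne (q₁ x') 0 with h0 | h0
  · simp [h0]
  have hle := integral_mul_abs_log_div_le hq₂ (fun x => hp x x')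
    (integrable_of_integral_eq_one (hp_int x')) (hx' h0)
  rw [hp_int x'] at hle
  show q₁ x' * _ ≤ q₁ x' * _ + 2 * q₁ x'
  nlinarith [hq₁ x']

end Integrals

section ProductDensity

variable {ι α : Type*} [DecidableEq ι]

def MeasurableEquiv.funSplitAt (s : ι) (α : Type*) [MeasurableSpace α] :
    (ι → α) ≃ᵐ α × ({j // j ≠ s} → α) where
  toEquiv := Equiv.funSplitAt s α
  measurable_toFun :=
    (measurable_pi_apply s).prodMk (measurable_pi_lambda _ fun j => measurable_pi_apply j.1)
  measurable_invFun := by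
    refine measurable_pi_lambda _ fun j => ?_
    simp only [Equiv.funSplitAt_symm_apply]
    split_ifs
    · exact measurable_fst
    · exact (measurable_pi_apply _).comp measurable_snd

@[simp]
theorem MeasurableEquiv.funSplitAt_symm_apply (s : ι) [MeasurableSpace α]
    (z : α × ({j // j ≠ s} → α)) (j : ι) :
    (MeasurableEquiv.funSplitAt s α).symm z j = if h : j = s then z.1 else z.2 ⟨j, h⟩ :=
  Equiv.funSplitAt_symm_apply s α z j

variable [Fintype ι]

theorem prod_mul_eval_eq (q : ι → α → ℝ) (s : ι) (g : α → ℝ) (θ : ι → α) :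
    (∏ i, q i (θ i)) * g (θ s) = q s (θ s) * g (θ s) * ∏ j : {j // j ≠ s}, q j (θ j) := by
  rw [Fintype.prod_eq_mul_prod_subtype_ne _ s]
  ring

variable [MeasureSpace α] [SigmaFinite (volume : Measure α)]

theorem volume_preserving_funSplitAt (s : ι) :
    MeasurePreserving (MeasurableEquiv.funSplitAt s α) := by
  refine MeasurePreserving.symm _ ⟨(MeasurableEquiv.funSplitAt s α).symm.measurable, ?_⟩
  refine (Measure.pi_eq fun A hA => ?_).symm
  have hpre : (MeasurableEquiv.funSplitAt s α).symm ⁻¹' Set.univ.pi A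
      = A s ×ˢ Set.univ.pi fun j : {j // j ≠ s} => A j := by
    ext ⟨x, y⟩
    simp only [Set.mem_preimage, Set.mem_univ_pi, Set.mem_prod]
    constructor
    · intro h
      exact ⟨by simpa using h s, fun j => by simpa [j.2] using h j⟩
    · rintro ⟨hx, hy⟩ j
      by_cases h : j = s
      · subst h; simpa using hx
      · simpa [h] using hy ⟨j, h⟩
  rw [Measure.map_apply (MeasurableEquiv.measurable _) (MeasurableSet.univ_pi hA), hpre,
    Measure.volume_eq_prod, Measure.prod_prod, volume_pi_pi,
    Fintype.prod_eq_mul_prod_subtype_ne _ s]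

theorem integral_comp_funSplitAt {E : Type*} [NormedAddCommGroup E] [NormedSpace ℝ E] (s : ι)
    (F : α × ({j // j ≠ s} → α) → E) :
    ∫ θ : ι → α, F (θ s, fun j => θ j) = ∫ z, F z ∂(volume.prod volume) :=
  (volume_preserving_funSplitAt s).integral_comp' F

theorem integrable_comp_funSplitAt_iff {E : Type*} [NormedAddCommGroup E] (s : ι)
    {F : α × ({j // j ≠ s} → α) → E} :
    Integrable (fun θ : ι → α => F (θ s, fun j => θ j)) ↔ Integrable F (volume.prod volume) :=
  (volume_preserving_funSplitAt s).integrable_comp_emb (MeasurableEquiv.measurableEmbedding _)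

theorem integral_prod_mul_eval {q : ι → α → ℝ} (hq : ∀ i, ∫ x, q i x = 1) (s : ι) (g : α → ℝ) :
    ∫ θ : ι → α, (∏ i, q i (θ i)) * g (θ s) = ∫ x, q s x * g x := by
  simp_rw [prod_mul_eval_eq q s g]
  rw [integral_comp_funSplitAt s fun z => q s z.1 * g z.1 * ∏ j : {j // j ≠ s}, q j (z.2 j),
    integral_prod_mul (fun x => q s x * g x)
      fun y : {j // j ≠ s} → α => ∏ j : {j // j ≠ s}, q j (y j),
    integral_fintype_prod_volume_eq_prod]
  simp [hq]

theorem integrable_prod_mul_eval {q : ι → α → ℝ} (hq : ∀ i, Integrable (q i)) (s : ι)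
    {g : α → ℝ} (hg : Integrable fun x => q s x * g x) :
    Integrable fun θ : ι → α => (∏ i, q i (θ i)) * g (θ s) := by
  simp_rw [prod_mul_eval_eq q s g]
  exact (integrable_comp_funSplitAt_iff s
    (F := fun z => q s z.1 * g z.1 * ∏ j : {j // j ≠ s}, q j (z.2 j))).mpr
    (hg.mul_prod (Integrable.fintype_prod (f := fun j : {j // j ≠ s} => q j) fun j => hq j))

theorem integral_prod_mul_eval₂ {q : ι → α → ℝ} (hq : ∀ i, ∫ x, q i x = 1) {t s : ι}
    (hts : t ≠ s) {G : α → α → ℝ}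
    (hint : Integrable fun θ : ι → α => (∏ i, q i (θ i)) * G (θ t) (θ s)) :
    ∫ θ : ι → α, (∏ i, q i (θ i)) * G (θ t) (θ s) = ∫ x', q s x' * ∫ x, q t x * G x x' := by
  simp_rw [Fintype.prod_eq_mul_prod_subtype_ne _ s, mul_assoc] at hint ⊢
  let F : α × ({j // j ≠ s} → α) → ℝ := fun z =>
    q s z.1 * ((∏ j : {j // j ≠ s}, q j (z.2 j)) * G (z.2 ⟨t, hts⟩) z.1)
  rw [integral_comp_funSplitAt s F, integral_prod F ((integrable_comp_funSplitAt_iff s).mp hint)]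
  congr 1 with x'
  simp only [F]
  rw [integral_const_mul,
    integral_prod_mul_eval (fun j : {j // j ≠ s} => hq j.1) ⟨t, hts⟩ fun x => G x x']

theorem integrable_prod_mul_eval₂ {q : ι → α → ℝ} (hq_meas : ∀ i, Measurable (q i))
    (hq_nonneg : ∀ i x, 0 ≤ q i x) (hq : ∀ i, ∫ x, q i x = 1) {t s : ι} (hts : t ≠ s)
    {G : α → α → ℝ} (hG : Measurable (uncurry G))
    (hsec : ∀ᵐ x', q s x' ≠ 0 → Integrable fun x => q t x * G x x')
    (hnorm : Integrable fun x' => q s x' * ∫ x, q t x * |G x x'|) :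
    Integrable fun θ : ι → α => (∏ i, q i (θ i)) * G (θ t) (θ s) := by
  simp_rw [Fintype.prod_eq_mul_prod_subtype_ne _ s, mul_assoc]
  let F : α × ({j // j ≠ s} → α) → ℝ := fun z =>
    q s z.1 * ((∏ j : {j // j ≠ s}, q j (z.2 j)) * G (z.2 ⟨t, hts⟩) z.1)
  have hF_meas : Measurable F := by fun_prop
  refine (integrable_comp_funSplitAt_iff s (F := F)).mpr
    ((integrable_prod_iff hF_meas.aestronglyMeasurable).mpr ⟨?_, ?_⟩)
  · filter_upwards [hsec] with x' hx'
    rcases eq_or_ne (q s x') 0 with h0 | h0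
    · simp [F, h0]
    have hq_int : ∀ j : {j // j ≠ s}, Integrable (q j) :=
      fun j => integrable_of_integral_eq_one (hq j)
    exact (integrable_prod_mul_eval hq_int ⟨t, hts⟩ (hx' h0)).const_mul (q s x')
  · refine hnorm.congr (Eventually.of_forall fun x' => ?_)
    simp only [F, norm_mul, norm_prod, Real.norm_eq_abs, abs_of_nonneg (hq_nonneg _ _)]
    rw [integral_const_mul,
      integral_prod_mul_eval (fun j : {j // j ≠ s} => hq j.1) ⟨t, hts⟩ fun x => |G x x'|]

theorem integral_mul_log_div_prior_eq_sum {q : ι → α → ℝ} (hq_meas : ∀ i, Measurable (q i))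
    (hq_nonneg : ∀ i x, 0 ≤ q i x) (hq_int : ∀ i, ∫ x, q i x = 1) {r : ι} {S : Finset ι}
    (hrS : r ∉ S) (hS : insert r S = univ) {par : ι → ι} (hpar : ∀ t ∈ S, t ≠ par t)
    {p₀ : α → ℝ} {p : ι → α → α → ℝ} (hp_meas : ∀ t ∈ S, Measurable (uncurry (p t)))
    (hp_nonneg : ∀ t ∈ S, ∀ x x', 0 ≤ p t x x') (hp_int : ∀ t ∈ S, ∀ x', ∫ x, p t x x' = 1)
    (hsupp : ∀ᵐ θ : ι → α,
      p₀ (θ r) * ∏ t ∈ S, p t (θ t) (θ (par t)) = 0 → ∏ i, q i (θ i) = 0)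
    (hint : Integrable fun θ : ι → α => (∏ i, q i (θ i)) *
      log ((∏ i, q i (θ i)) / (p₀ (θ r) * ∏ t ∈ S, p t (θ t) (θ (par t)))))
    (hsec : ∀ t ∈ S, ∀ᵐ x', q (par t) x' ≠ 0 →
      Integrable fun x => q t x * |log (q t x / p t x x')|)
    (hKL : ∀ t ∈ S, Integrable fun x' => q (par t) x' * ∫ x, q t x * log (q t x / p t x x')) :
    ∫ θ : ι → α, (∏ i, q i (θ i)) *
        log ((∏ i, q i (θ i)) / (p₀ (θ r) * ∏ t ∈ S, p t (θ t) (θ (par t))))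
      = (∫ x, q r x * log (q r x / p₀ x))
        + ∑ t ∈ S, ∫ x', q (par t) x' * ∫ x, q t x * log (q t x / p t x x') := by
  have hfactor_int : ∀ t ∈ S, Integrable fun θ : ι → α =>
      (∏ i, q i (θ i)) * log (q t (θ t) / p t (θ t) (θ (par t))) := by
    intro t ht
    have hsec' : ∀ᵐ x', q (par t) x' ≠ 0 → Integrable fun x => q t x * log (q t x / p t x x') :=
      (hsec t ht).mono fun x' h h0 => integrable_mul_log_of_mul_abs_log (hq_meas t)
        ((hq_meas t).div ((hp_meas t ht).comp measurable_prodMk_right)) (hq_nonneg t) (h h0)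
    exact integrable_prod_mul_eval₂ hq_meas hq_nonneg hq_int (hpar t ht)
      (G := fun x x' => log (q t x / p t x x'))
      (measurable_log.comp (((hq_meas t).comp measurable_fst).div (hp_meas t ht))) hsec'
      (integrable_mul_integral_mul_abs_log_div (hq_meas _) (hq_nonneg _)
        (integrable_of_integral_eq_one (hq_int _)) (hq_meas t) (hq_nonneg t) (hp_meas t ht)
        (hp_nonneg t ht) (hp_int t ht) hsec' (hKL t ht))
  have hchain : ∀ᵐ θ : ι → α, (∏ i, q i (θ i)) *
        log ((∏ i, q i (θ i)) / (p₀ (θ r) * ∏ t ∈ S, p t (θ t) (θ (par t))))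
      = (∏ i, q i (θ i)) * log (q r (θ r) / p₀ (θ r))
        + ∑ t ∈ S, (∏ i, q i (θ i)) * log (q t (θ t) / p t (θ t) (θ (par t))) := by
    filter_upwards [hsupp] with θ hθ
    have hQ : ∏ i, q i (θ i) = q r (θ r) * ∏ t ∈ S, q t (θ t) := by
      rw [← hS, prod_insert hrS]
    have h := mul_log_mul_prod_div_mul_prod S (c := ∏ i, q i (θ i)) (a := q r (θ r))
      (b := p₀ (θ r)) (x := fun t => q t (θ t)) (y := fun t => p t (θ t) (θ (par t)))
      fun hc => ⟨hQ ▸ hc, fun h => hc (hθ h)⟩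
    rwa [← hQ] at h
  have hroot_int : Integrable fun θ : ι → α =>
      (∏ i, q i (θ i)) * log (q r (θ r) / p₀ (θ r)) :=
    (hint.sub (integrable_finsetSum S hfactor_int)).congr
      (hchain.mono fun θ h => by simp only [Pi.sub_apply, h]; ring)
  rw [integral_congr_ae hchain, integral_add hroot_int (integrable_finsetSum S hfactor_int),
    integral_finsetSum S hfactor_int,
    integral_prod_mul_eval hq_int r fun x => log (q r x / p₀ x)]
  exact congrArg _ (sum_congr rfl fun t ht => integral_prod_mul_eval₂ hq_int (hpar t ht)
    (G := fun x x' => log (q t x / p t x x')) (hfactor_int t ht))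

end ProductDensity

theorem insert_mk_zero_filter_one_le {T : ℕ} (hT : 0 < T) :
    insert (⟨0, hT⟩ : Fin T) (univ.filter fun t : Fin T => 1 ≤ (t : ℕ)) = univ := by
  ext t
  simp only [mem_insert, mem_filter, mem_univ, true_and, iff_true, Fin.ext_iff]
  omega

theorem ne_prevStage'_of_one_le {T : ℕ} {t : Fin T} (ht : 1 ≤ (t : ℕ)) : t ≠ prevStage' t := by
  simp only [Ne, Fin.ext_iff, prevStage']
  omega

theorem log_evidence_ge_multistage_elbo_general
    (K T : ℕ) (hT : 0 < T)
    (q : Fin T → (Fin K → ℝ) → ℝ)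
    (hq_meas : ∀ t, Measurable (q t))
    (hq_nonneg : ∀ t x, 0 ≤ q t x)
    (hq_int : ∀ t, ∫ x, q t x = 1)
    (L : Fin T → (Fin K → ℝ) → ℝ)
    (hL_meas : ∀ t, Measurable (L t))
    (hL_pos : ∀ t x, 0 < L t x)
    (hqL_int : ∀ t, Integrable (fun x => q t x * |Real.log (L t x)|))
    (p1 : (Fin K → ℝ) → ℝ)
    (hp1_meas : Measurable p1) (hp1_nonneg : ∀ x, 0 ≤ p1 x)
    (ptr : Fin T → (Fin K → ℝ) → (Fin K → ℝ) → ℝ)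
    (hptr_meas : ∀ t : Fin T, 1 ≤ (t : ℕ) → Measurable (Function.uncurry (ptr t)))
    (hptr_nonneg : ∀ t : Fin T, 1 ≤ (t : ℕ) → ∀ x x', 0 ≤ ptr t x x')
    (hptr_density : ∀ t : Fin T, 1 ≤ (t : ℕ) → ∀ x', ∫ x, ptr t x x' = 1)
    (Q P : (Fin T → Fin K → ℝ) → ℝ)
    (hQ : Q = fun θ => ∏ t, q t (θ t))
    (hP : P = fun θ => p1 (θ ⟨0, hT⟩) *
      ∏ t ∈ Finset.univ.filter (fun t : Fin T => 1 ≤ (t : ℕ)),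
        ptr t (θ t) (θ (prevStage' t)))
    (hPL_int : Integrable (fun θ => P θ * ∏ t, L t (θ t))
      (volume : Measure (Fin T → Fin K → ℝ)))
    (Z : ℝ) (hZ : Z = ∫ θ : Fin T → Fin K → ℝ, P θ * ∏ t, L t (θ t))
    (hZ_pos : 0 < Z)
    (hQP_supp : ∀ᵐ θ ∂(volume : Measure (Fin T → Fin K → ℝ)), P θ = 0 → Q θ = 0)
    (hQP_int : Integrable (fun θ => Q θ * |Real.log (Q θ / P θ)|)
      (volume : Measure (Fin T → Fin K → ℝ)))
    (KLt : Fin T → (Fin K → ℝ) → ℝ)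
    (hKLt : ∀ t : Fin T, 1 ≤ (t : ℕ) → ∀ x',
      KLt t x' = ∫ x, q t x * Real.log (q t x / ptr t x x'))
    (hKL_defined : ∀ t : Fin T, 1 ≤ (t : ℕ) →
      ∀ᵐ x' ∂(volume : Measure (Fin K → ℝ)), q (prevStage' t) x' ≠ 0 →
        ((∀ᵐ x ∂(volume : Measure (Fin K → ℝ)), ptr t x x' = 0 → q t x = 0) ∧
          Integrable (fun x => q t x * |Real.log (q t x / ptr t x x')|)))
    (hKL_int : ∀ t : Fin T, 1 ≤ (t : ℕ) →
      Integrable (fun x' => q (prevStage' t) x' * KLt t x')) :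
    Real.log Z ≥
      (-(∫ x, q ⟨0, hT⟩ x * Real.log (q ⟨0, hT⟩ x / p1 x))
          + ∫ x, q ⟨0, hT⟩ x * Real.log (L ⟨0, hT⟩ x))
        + ∑ t ∈ Finset.univ.filter (fun t : Fin T => 1 ≤ (t : ℕ)),
            (-(∫ x', q (prevStage' t) x' * KLt t x')
              + ∫ x, q t x * Real.log (L t x)) := by
  subst hQ hP hZ
  set t₀ : Fin T := ⟨0, hT⟩
  set S := univ.filter fun t : Fin T => 1 ≤ (t : ℕ)
  have hS_pos : ∀ t ∈ S, 1 ≤ (t : ℕ) := fun t ht => (mem_filter.mp ht).2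
  have ht₀S : t₀ ∉ S := by simp [S, t₀]
  have hS : insert t₀ S = univ := insert_mk_zero_filter_one_le hT
  have hQ_meas : Measurable fun θ : Fin T → Fin K → ℝ => ∏ t, q t (θ t) := by fun_prop
  have hP_meas : Measurable fun θ : Fin T → Fin K → ℝ =>
      p1 (θ t₀) * ∏ t ∈ S, ptr t (θ t) (θ (prevStage' t)) :=
    (hp1_meas.comp (measurable_pi_apply t₀)).mul <| Finset.measurable_prod S fun t ht =>
      (hptr_meas t (hS_pos t ht)).comp
        (f := fun θ : Fin T → Fin K → ℝ => (θ t, θ (prevStage' t))) (by fun_prop)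
  have hQ_nonneg : ∀ θ : Fin T → Fin K → ℝ, 0 ≤ ∏ t, q t (θ t) :=
    fun θ => prod_nonneg fun t _ => hq_nonneg t (θ t)
  have hQP := integrable_mul_log_of_mul_abs_log hQ_meas (hQ_meas.div hP_meas) hQ_nonneg hQP_int
  have hKL := integral_mul_log_div_prior_eq_sum hq_meas hq_nonneg hq_int ht₀S hS
    (fun t ht => ne_prevStage'_of_one_le (hS_pos t ht))
    (fun t ht => hptr_meas t (hS_pos t ht)) (fun t ht => hptr_nonneg t (hS_pos t ht))
    (fun t ht => hptr_density t (hS_pos t ht)) hQP_supp hQP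
    (fun t ht => (hKL_defined t (hS_pos t ht)).mono fun x' h h0 => (h h0).2)
    (fun t ht => by simpa only [hKLt t (hS_pos t ht)] using hKL_int t (hS_pos t ht))
  have hELBO := elbo_le_log_integral_mul_prod (L := fun t θ => L t (θ t)) hQ_nonneg
    (by rw [integral_fintype_prod_volume_eq_prod]; simp [hq_int])
    (fun θ => mul_nonneg (hp1_nonneg _)
      (prod_nonneg fun t ht => hptr_nonneg t (hS_pos t ht) _ _))
    (fun t θ => hL_pos t (θ t)) hPL_int hZ_pos hQP_supp hQP
    (fun t => integrable_prod_mul_eval (fun t => integrable_of_integral_eq_one (hq_int t)) t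
      (integrable_mul_log_of_mul_abs_log (hq_meas t) (hL_meas t) (hq_nonneg t) (hqL_int t)))
  have hmarg : ∀ t, ∫ θ : Fin T → Fin K → ℝ, (∏ i, q i (θ i)) * log (L t (θ t))
      = ∫ x, q t x * log (L t x) := fun t => integral_prod_mul_eval hq_int t fun x => log (L t x)
  have hsplit : ∑ t, ∫ x, q t x * log (L t x)
      = (∫ x, q t₀ x * log (L t₀ x)) + ∑ t ∈ S, ∫ x, q t x * log (L t x) := by
    rw [← hS, sum_insert ht₀S]
  have hKLt' : ∑ t ∈ S, ∫ x', q (prevStage' t) x' * KLt t x'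
      = ∑ t ∈ S, ∫ x', q (prevStage' t) x' * ∫ x, q t x * log (q t x / ptr t x x') :=
    sum_congr rfl fun t ht => by simp_rw [hKLt t (hS_pos t ht)]
  beta_reduce at hELBO ⊢
  simp_rw [hmarg] at hELBO
  rw [hKL, hsplit] at hELBO
  rw [ge_iff_le, sum_add_distrib, sum_neg_distrib, hKLt']
  linarith

/-- **T-stage ELBO.** With stage-wise variational densities `q_t`,
positive measurable likelihoods `L_t`, a Markov prior
`P(θ) = p₁(θ₀)·∏_{t≥1} p_t(θ_t, θ_{t−1})` on `(ℝ^K)^T` (Lebesgue measure),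
and evidence `Z = ∫ P(θ)·∏_t L_t(θ_t) dθ` with `0 < Z < ∞`, under the stated
support and integrability conditions, the log evidence admits the lower bound
`log Z ≥ [−KL(q₁‖p₁) + ∫ q₁ log L₁] + Σ_{t≥1} [−∫ q_{t−1}(θ′)·KL(q_t‖p_t(·,θ′)) dθ′ + ∫ q_t log L_t]`. -/
theorem log_evidence_ge_multistage_elbo
    (K T : ℕ) (hK : 1 ≤ K) (hT : 0 < T)
    (q : Fin T → (Fin K → ℝ) → ℝ)
    (hq_meas : ∀ t, Measurable (q t))
    (hq_nonneg : ∀ t x, 0 ≤ q t x)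
    (hq_int : ∀ t, ∫ x, q t x = 1)
    (L : Fin T → (Fin K → ℝ) → ℝ)
    (hL_meas : ∀ t, Measurable (L t))
    (hL_pos : ∀ t x, 0 < L t x)
    (hqL_int : ∀ t, Integrable (fun x => q t x * |Real.log (L t x)|))
    (p1 : (Fin K → ℝ) → ℝ)
    (hp1_meas : Measurable p1) (hp1_nonneg : ∀ x, 0 ≤ p1 x) (hp1_int : ∫ x, p1 x = 1)
    (ptr : Fin T → (Fin K → ℝ) → (Fin K → ℝ) → ℝ)
    (hptr_meas : ∀ t : Fin T, 1 ≤ (t : ℕ) → Measurable (Function.uncurry (ptr t)))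
    (hptr_nonneg : ∀ t : Fin T, 1 ≤ (t : ℕ) → ∀ x x', 0 ≤ ptr t x x')
    (hptr_density : ∀ t : Fin T, 1 ≤ (t : ℕ) → ∀ x', ∫ x, ptr t x x' = 1)
    (Q P : (Fin T → Fin K → ℝ) → ℝ)
    (hQ : Q = fun θ => ∏ t, q t (θ t))
    (hP : P = fun θ => p1 (θ ⟨0, hT⟩) *
      ∏ t ∈ Finset.univ.filter (fun t : Fin T => 1 ≤ (t : ℕ)),
        ptr t (θ t) (θ (prevStage' t)))
    (hPL_int : Integrable (fun θ => P θ * ∏ t, L t (θ t))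
      (volume : Measure (Fin T → Fin K → ℝ)))
    (Z : ℝ) (hZ : Z = ∫ θ : Fin T → Fin K → ℝ, P θ * ∏ t, L t (θ t))
    (hZ_pos : 0 < Z)
    (hQP_supp : ∀ᵐ θ ∂(volume : Measure (Fin T → Fin K → ℝ)), P θ = 0 → Q θ = 0)
    (hQP_int : Integrable (fun θ => Q θ * |Real.log (Q θ / P θ)|)
      (volume : Measure (Fin T → Fin K → ℝ)))
    (KLt : Fin T → (Fin K → ℝ) → ℝ)
    (hKLt : ∀ t : Fin T, 1 ≤ (t : ℕ) → ∀ x',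
      KLt t x' = ∫ x, q t x * Real.log (q t x / ptr t x x'))
    (hKL_defined : ∀ t : Fin T, 1 ≤ (t : ℕ) →
      ∀ᵐ x' ∂(volume : Measure (Fin K → ℝ)), q (prevStage' t) x' ≠ 0 →
        ((∀ᵐ x ∂(volume : Measure (Fin K → ℝ)), ptr t x x' = 0 → q t x = 0) ∧
          Integrable (fun x => q t x * |Real.log (q t x / ptr t x x')|)))
    (hKL_int : ∀ t : Fin T, 1 ≤ (t : ℕ) →
      Integrable (fun x' => q (prevStage' t) x' * KLt t x')) :
    Real.log Z ≥
      (-(∫ x, q ⟨0, hT⟩ x * Real.log (q ⟨0, hT⟩ x / p1 x))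
          + ∫ x, q ⟨0, hT⟩ x * Real.log (L ⟨0, hT⟩ x))
        + ∑ t ∈ Finset.univ.filter (fun t : Fin T => 1 ≤ (t : ℕ)),
            (-(∫ x', q (prevStage' t) x' * KLt t x')
              + ∫ x, q t x * Real.log (L t x)) :=
  log_evidence_ge_multistage_elbo_general K T hT q hq_meas hq_nonneg hq_int L hL_meas hL_pos hqL_int
    p1 hp1_meas hp1_nonneg ptr hptr_meas hptr_nonneg hptr_density Q P hQ hP hPL_int Z hZ hZ_pos
    hQP_supp hQP_int KLt hKLt hKL_defined hKL_int
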